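/- arXiv:2305.18246 — 3 statements merged into one kernel-verified Lean document; each statement's English description precedes it below -/
import Mathlib

section
/- Let λ > 0, H > 0, and let φ_1, …, φ_{k−1} ∈ ℝ^d satisfy ‖φ_τ‖₂ ≤ 1 and y_1, …, y_{k−1} ∈ ℝ satisfy |y_τ| ≤ 2H for all τ. Let Λ = λI + Σ_{τ=1}^{k−1} φ_τ φ_τᵀ. Then ‖Λ^{−1} Σ_{τ=1}^{k−1} y_τ φ_τ‖₂ ≤ 2H·√(k·d/λ). -/
/-!
Write `Λ = λ I + ∑ τ φ_τ φ_τᵀ` and `x = Λ⁻¹ ∑ τ y_τ φ_τ`. Testing the normal equations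
`Λ x = ∑ τ y_τ φ_τ` against `x` gives `λ ‖x‖² + ∑ τ (φ_τ ⬝ x)² = ∑ τ y_τ (φ_τ ⬝ x)`, and since
`y s - s² ≤ y² / 4` this yields `λ ‖x‖² ≤ ∑ τ y_τ² / 4 ≤ (k - 1) H²`. That is stronger than the
claimed bound once `d ≥ 1`; for `d = 0` both sides vanish.
-/

open Matrix

/-- Interpret a plain vector as an element of Euclidean space (so that `‖·‖` is
the Euclidean `ℓ²` norm). -/
noncomputable def toE {d : ℕ} (v : Fin d → ℝ) : EuclideanSpace ℝ (Fin d) := WithLp.toLp 2 v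

theorem norm_toE_sq {d : ℕ} (v : Fin d → ℝ) : ‖toE v‖ ^ 2 = v ⬝ᵥ v := by
  rw [← real_inner_self_eq_norm_sq, toE, EuclideanSpace.inner_toLp_toLp, star_trivial]

section Ridge

variable {n ι : Type*} [Fintype n] [DecidableEq n] [Fintype ι]

def ridgeGram (lam : ℝ) (φ : ι → n → ℝ) : Matrix n n ℝ :=
  lam • 1 + ∑ τ, vecMulVec (φ τ) (φ τ)

theorem posDef_ridgeGram {lam : ℝ} (hlam : 0 < lam) (φ : ι → n → ℝ) :
    (ridgeGram lam φ).PosDef :=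
  (PosDef.one.smul hlam).add_posSemidef
    (posSemidef_sum _ fun τ _ => by simpa using posSemidef_vecMulVec_self_star (φ τ))

theorem dotProduct_ridgeGram_mulVec (lam : ℝ) (φ : ι → n → ℝ) (x : n → ℝ) :
    x ⬝ᵥ (ridgeGram lam φ *ᵥ x) = lam * (x ⬝ᵥ x) + ∑ τ, (φ τ ⬝ᵥ x) ^ 2 := by
  simp only [ridgeGram, add_mulVec, smul_mulVec, one_mulVec, sum_mulVec, vecMulVec_mulVec,
    dotProduct_add, dotProduct_smul, dotProduct_sum, smul_eq_mul, op_smul_eq_smul,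
    dotProduct_comm x (φ _), sq]

theorem mul_dotProduct_self_le_of_ridgeGram_mulVec_eq {lam : ℝ} {φ : ι → n → ℝ} {y : ι → ℝ}
    {x : n → ℝ} (hx : ridgeGram lam φ *ᵥ x = ∑ τ, y τ • φ τ) :
    lam * (x ⬝ᵥ x) ≤ ∑ τ, y τ ^ 2 / 4 := by
  have hnormal : lam * (x ⬝ᵥ x) + ∑ τ, (φ τ ⬝ᵥ x) ^ 2 = ∑ τ, y τ * (φ τ ⬝ᵥ x) := by
    rw [← dotProduct_ridgeGram_mulVec, hx, dotProduct_sum]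
    simp only [dotProduct_comm x, smul_dotProduct, smul_eq_mul]
  have hterm : ∀ τ, y τ * (φ τ ⬝ᵥ x) - (φ τ ⬝ᵥ x) ^ 2 ≤ y τ ^ 2 / 4 := fun τ => by
    nlinarith [sq_nonneg (y τ / 2 - φ τ ⬝ᵥ x)]
  calc lam * (x ⬝ᵥ x) = ∑ τ, (y τ * (φ τ ⬝ᵥ x) - (φ τ ⬝ᵥ x) ^ 2) := by
        rw [Finset.sum_sub_distrib]; linarith
    _ ≤ ∑ τ, y τ ^ 2 / 4 := Finset.sum_le_sum fun τ _ => hterm τ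

theorem ridgeGram_mulVec_inv_mulVec {lam : ℝ} (hlam : 0 < lam) (φ : ι → n → ℝ) (b : n → ℝ) :
    ridgeGram lam φ *ᵥ ((ridgeGram lam φ)⁻¹ *ᵥ b) = b := by
  have hdet := (isUnit_iff_isUnit_det _).mp (posDef_ridgeGram hlam φ).isUnit
  rw [mulVec_mulVec, mul_nonsing_inv _ hdet, one_mulVec]

end Ridge

theorem norm_ridge_solution_le_general
    (d k : ℕ) (lam H : ℝ) (hlam : 0 < lam) (hH : 0 < H)
    (φ : Fin (k - 1) → (Fin d → ℝ)) (y : Fin (k - 1) → ℝ)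
    (hy : ∀ τ, |y τ| ≤ 2 * H)
    (Λ : Matrix (Fin d) (Fin d) ℝ)
    (hΛ : Λ = lam • (1 : Matrix (Fin d) (Fin d) ℝ) + ∑ τ, vecMulVec (φ τ) (φ τ)) :
    ‖toE (Λ⁻¹ *ᵥ ∑ τ, y τ • φ τ)‖ ≤ 2 * H * Real.sqrt (k * d / lam) := by
  rcases Nat.eq_zero_or_pos d with rfl | hd
  · rw [Subsingleton.elim (toE _) 0]; simp
  change Λ = ridgeGram lam φ at hΛ
  subst hΛ
  set x := (ridgeGram lam φ)⁻¹ *ᵥ ∑ τ, y τ • φ τ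
  have hy_sq : ∀ τ, y τ ^ 2 / 4 ≤ H ^ 2 := fun τ => by
    nlinarith [sq_abs (y τ), abs_nonneg (y τ), hy τ]
  have hbound : lam * ‖toE x‖ ^ 2 ≤ k * H ^ 2 :=
    calc lam * ‖toE x‖ ^ 2 ≤ ∑ τ, y τ ^ 2 / 4 := by
          rw [norm_toE_sq]
          exact mul_dotProduct_self_le_of_ridgeGram_mulVec_eq (ridgeGram_mulVec_inv_mulVec hlam _ _)
      _ ≤ (k - 1 : ℕ) * H ^ 2 := (Finset.sum_le_sum fun τ _ => hy_sq τ).trans_eq (by simp)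
      _ ≤ k * H ^ 2 := by gcongr; exact_mod_cast Nat.sub_le k 1
  rw [← abs_of_pos (by positivity : 0 < 2 * H), ← Real.sqrt_sq_eq_abs,
    ← Real.sqrt_mul (sq_nonneg _)]
  refine Real.le_sqrt_of_sq_le ?_
  rw [mul_div_assoc', le_div_iff₀ hlam]
  have hd1 : (1 : ℝ) ≤ d := by exact_mod_cast hd
  have hkH : (0 : ℝ) ≤ k * H ^ 2 := by positivity
  nlinarith [mul_le_mul_of_nonneg_left hd1 hkH]

/-- abstract form of Lemma B.2. With `Λ = λ I + ∑ τ φ_τ φ_τᵀ`,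
`‖φ_τ‖₂ ≤ 1` and `|y_τ| ≤ 2H`, the regularized least-squares solution satisfies
`‖Λ⁻¹ ∑ τ y_τ φ_τ‖₂ ≤ 2 H √(k d / λ)`. -/
theorem norm_ridge_solution_le
    (d k : ℕ) (hk : 1 ≤ k) (lam H : ℝ) (hlam : 0 < lam) (hH : 0 < H)
    (φ : Fin (k - 1) → (Fin d → ℝ)) (y : Fin (k - 1) → ℝ)
    (hφ : ∀ τ, ‖toE (φ τ)‖ ≤ 1) (hy : ∀ τ, |y τ| ≤ 2 * H)
    (Λ : Matrix (Fin d) (Fin d) ℝ)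
    (hΛ : Λ = lam • (1 : Matrix (Fin d) (Fin d) ℝ) + ∑ τ, vecMulVec (φ τ) (φ τ)) :
    ‖toE (Λ⁻¹ *ᵥ ∑ τ, y τ • φ τ)‖ ≤ 2 * H * Real.sqrt (k * d / lam) :=
  norm_ridge_solution_le_general d k lam H hlam hH φ y hy Λ hΛ
end

section
/- Let λ > 0, let φ_1, …, φ_t ∈ ℝ^d, and let Λ = λI + Σ_{i=1}^{t} φ_i φ_iᵀ. Then Σ_{i=1}^{t} φ_iᵀ Λ^{−1} φ_i ≤ d. -/
open Matrix

/-! The quadratic forms add up to `tr (Λ⁻¹ ∑ φᵢ φᵢᵀ) = tr (Λ⁻¹ (Λ - λ I)) = d - λ tr Λ⁻¹`,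
and `tr Λ⁻¹ ≥ 0` because `Λ⁻¹` is positive definite along with `Λ`. -/

theorem Matrix.sum_dotProduct_mulVec_eq_trace_mul_sum_vecMulVec
    {n ι R : Type*} [Fintype n] [Fintype ι] [CommSemiring R]
    (A : Matrix n n R) (φ : ι → n → R) :
    ∑ i, φ i ⬝ᵥ (A *ᵥ φ i) = (A * ∑ i, vecMulVec (φ i) (φ i)).trace := by
  simp only [Matrix.mul_sum, trace_sum, mul_vecMulVec, trace_vecMulVec, dotProduct_comm]

theorem Matrix.posDef_smul_one_add_sum_vecMulVec
    {n ι : Type*} [Fintype n] [DecidableEq n] [Fintype ι]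
    {c : ℝ} (hc : 0 < c) (φ : ι → n → ℝ) :
    (c • (1 : Matrix n n ℝ) + ∑ i, vecMulVec (φ i) (φ i)).PosDef :=
  (PosDef.one.smul hc).add_posSemidef <|
    posSemidef_sum _ fun i _ ↦ posSemidef_vecMulVec_self_star (φ i)

theorem Matrix.PosDef.trace_inv_mul_sub_smul_one_le
    {n : Type*} [Fintype n] [DecidableEq n]
    {Λ : Matrix n n ℝ} (hΛ : Λ.PosDef) {c : ℝ} (hc : 0 ≤ c) :
    (Λ⁻¹ * (Λ - c • 1)).trace ≤ Fintype.card n := by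
  have htrace : (Λ⁻¹ * (Λ - c • 1)).trace = Fintype.card n - c * Λ⁻¹.trace := by
    rw [Matrix.mul_sub, nonsing_inv_mul _ ((isUnit_iff_isUnit_det _).mp hΛ.isUnit),
      Matrix.mul_smul, Matrix.mul_one, trace_sub, trace_one, trace_smul, smul_eq_mul]
  rw [htrace]
  linarith [mul_nonneg hc hΛ.posSemidef.inv.trace_nonneg]

/-- Lemma E.3 / Lemma D.1 of Jin et al. 2019.
Let `Λ = λ I + ∑ i φ i φ iᵀ` with `λ > 0`. Then `∑ i φ iᵀ Λ⁻¹ φ i ≤ d`. -/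
theorem sum_quadratic_form_inv_gram_le_dim
    (d t : ℕ) (lam : ℝ) (hlam : 0 < lam)
    (φ : Fin t → (Fin d → ℝ))
    (Λ : Matrix (Fin d) (Fin d) ℝ)
    (hΛ : Λ = lam • (1 : Matrix (Fin d) (Fin d) ℝ) + ∑ i, vecMulVec (φ i) (φ i)) :
    ∑ i, φ i ⬝ᵥ (Λ⁻¹ *ᵥ φ i) ≤ (d : ℝ) := by
  have hΛpos : Λ.PosDef := hΛ ▸ posDef_smul_one_add_sum_vecMulVec hlam φ
  calc ∑ i, φ i ⬝ᵥ (Λ⁻¹ *ᵥ φ i)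
      = (Λ⁻¹ * ∑ i, vecMulVec (φ i) (φ i)).trace :=
        sum_dotProduct_mulVec_eq_trace_mul_sum_vecMulVec _ φ
    _ = (Λ⁻¹ * (Λ - lam • 1)).trace := by rw [hΛ, add_sub_cancel_left]
    _ ≤ d := by simpa using hΛpos.trace_inv_mul_sub_smul_one_le hlam.le
end

section
/- Let S and A be sets with A nonempty, let H > 0, B > 0, let M ≥ 1 be an integer, and let φ : S × A → ℝ^d satisfy ‖φ(x,a)‖₂ ≤ 1 for all (x,a). For a tuple W = (w^1,…,w^M) of vectors in ℝ^d define V_W : S → ℝ by V_W(x) = sup_{a ∈ A} min{ max_{m ∈ {1,…,M}} ⟨φ(x,a), w^m⟩ , H }. Then for every ε > 0 there exists a finite set 𝒲 of tuples (w^1,…,w^M) with each ‖w^m‖₂ ≤ B and |𝒲| ≤ (1 + 2B/ε)^{dM} such that for every tuple W₁ with ‖w₁^m‖₂ ≤ B for all m there is W₂ ∈ 𝒲 with sup_{x ∈ S} |V_{W₁}(x) − V_{W₂}(x)| ≤ ε. Equivalently, the ε-covering number N of the class {V_W : ‖w^m‖₂ ≤ B for all m} with respect to the sup distance satisfies log N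 ≤ dM·log(1 + 2B/ε). -/
/-!
A maximal `ε`-separated subset of the `B`-ball is an `ε`-net of it. The balls of radius `ε/2`
around its points are disjoint and lie in the ball of radius `B + ε/2`, so comparing Haar volumes
bounds its size by `(1 + 2B/ε)^d`; the product net over the `M` coordinates has
`(1 + 2B/ε)^{dM}` tuples. Since `‖φ‖ ≤ 1` and `sup`, `min`, `max` are `1`-Lipschitz, `V_W` moves by
at most `max_m ‖w^m - w'^m‖` when `W` is replaced by `W'`.
-/
open scoped RealInnerProductSpace NNReal ENNReal
open Metric MeasureTheory Module Set

section Packing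

variable {E : Type*} [NormedAddCommGroup E] [NormedSpace ℝ E] [FiniteDimensional ℝ E]

theorem Metric.IsSeparated.card_le_of_subset_closedBall {ε : ℝ≥0} (hε : 0 < ε) {x : E} {B : ℝ}
    (hB : 0 ≤ B) {s : Finset E} (hs : (s : Set E) ⊆ closedBall x B)
    (hsep : IsSeparated ε (s : Set E)) :
    (s.card : ℝ) ≤ (1 + 2 * B / ε) ^ finrank ℝ E := by
  borelize E
  set μ : Measure E := Measure.addHaar
  set r : ℝ := ε / 2 with hr_def
  have hr : 0 < r := by positivity
  have hdisj : (s : Set E).PairwiseDisjoint fun y => closedBall y r := by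
    intro y hy z hz hyz
    refine closedBall_disjoint_closedBall ?_
    have hyz : (ε : ℝ≥0∞) < edist y z := hsep hy hz hyz
    rw [edist_nndist, ENNReal.coe_lt_coe, ← NNReal.coe_lt_coe, coe_nndist] at hyz
    linarith [hr_def]
  have hunion : (⋃ y ∈ s, closedBall y r) ⊆ closedBall x (B + r) :=
    iUnion₂_subset fun y hy =>
      closedBall_subset_closedBall' (by linarith [mem_closedBall.1 (hs hy)])
  have hvol : s.card * μ (closedBall x r) ≤ μ (closedBall x (B + r)) := by
    calc s.card * μ (closedBall x r) = ∑ y ∈ s, μ (closedBall y r) := by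
          simp only [Measure.addHaar_closedBall_center, Finset.sum_const, nsmul_eq_mul]
      _ = μ (⋃ y ∈ s, closedBall y r) :=
          (measure_biUnion_finset hdisj fun _ _ => measurableSet_closedBall).symm
      _ ≤ μ (closedBall x (B + r)) := measure_mono hunion
  rw [Measure.addHaar_closedBall μ x hr.le, Measure.addHaar_closedBall μ x (by positivity),
    ← mul_assoc, ENNReal.mul_le_mul_iff_left (measure_ball_pos μ 0 one_pos).ne'
      measure_ball_lt_top.ne, ← ENNReal.ofReal_natCast, ← ENNReal.ofReal_mul (by positivity),
    ENNReal.ofReal_le_ofReal_iff (by positivity), ← le_div_iff₀ (by positivity), ← div_pow] at hvol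
  rwa [show (B + r) / r = 1 + 2 * B / ε by rw [hr_def]; field_simp; ring] at hvol

theorem Metric.packingNumber_closedBall_ne_top {ε : ℝ≥0} (hε : 0 < ε) (x : E) {B : ℝ}
    (hB : 0 ≤ B) : packingNumber ε (closedBall x B) ≠ ⊤ := by
  set N := ⌊(1 + 2 * B / ε) ^ finrank ℝ E⌋₊
  refine ne_top_of_le_ne_top (ENat.natCast_ne_top N) (iSup₂_le fun C hC => iSup_le fun hsep => ?_)
  by_contra! hN
  obtain ⟨t, htC, ht_card⟩ := exists_subset_encard_eq (Order.add_one_le_of_lt hN)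
  have ht : t.Finite := finite_of_encard_eq_coe ht_card
  have hcard : ht.toFinset.card = N + 1 := by
    rw [← Nat.cast_inj (R := ℕ∞), ← encard_coe_eq_coe_finsetCard, ht.coe_toFinset, ht_card]
    norm_cast
  have hvol := IsSeparated.card_le_of_subset_closedBall hε hB (s := ht.toFinset)
    (by simpa using htC.trans hC) (by simpa using hsep.subset htC)
  rw [hcard, Nat.cast_succ] at hvol
  exact (Nat.lt_floor_add_one _).not_ge hvol

theorem Metric.exists_finset_isCover_closedBall {ε : ℝ≥0} (hε : 0 < ε) (x : E) {B : ℝ}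
    (hB : 0 ≤ B) : ∃ s : Finset E, (s : Set E) ⊆ closedBall x B ∧
      (s.card : ℝ) ≤ (1 + 2 * B / ε) ^ finrank ℝ E ∧ IsCover ε (closedBall x B) s := by
  have hpack := packingNumber_closedBall_ne_top hε x hB
  have hfin : (maximalSeparatedSet ε (closedBall x B)).Finite := by
    rw [← encard_ne_top_iff, encard_maximalSeparatedSet hpack]
    exact hpack
  refine ⟨hfin.toFinset, by simpa using maximalSeparatedSet_subset, ?_, by
    simpa using isCover_maximalSeparatedSet hpack⟩
  exact IsSeparated.card_le_of_subset_closedBall hε hB (by simpa using maximalSeparatedSet_subset)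
    (by simpa using isSeparated_maximalSeparatedSet)

end Packing

theorem Real.abs_ciSup_sub_ciSup_le {ι : Sort*} {f g : ι → ℝ} {ε : ℝ} (hf : BddAbove (range f))
    (hg : BddAbove (range g)) (hε : 0 ≤ ε) (hfg : ∀ i, |f i - g i| ≤ ε) :
    |(⨆ i, f i) - ⨆ i, g i| ≤ ε := by
  cases isEmpty_or_nonempty ι
  · simpa [Real.iSup_of_isEmpty] using hε
  rw [abs_sub_le_iff]
  constructor
  · refine sub_le_iff_le_add.2 (ciSup_le fun i => ?_)
    linarith [le_ciSup hg i, (abs_sub_le_iff.1 (hfg i)).1]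
  · refine sub_le_iff_le_add.2 (ciSup_le fun i => ?_)
    linarith [le_ciSup hf i, (abs_sub_le_iff.1 (hfg i)).2]

section OptimisticValue

variable {S A ι E : Type*} [NormedAddCommGroup E] [InnerProductSpace ℝ E]

noncomputable def optimisticValue (φ : S × A → E) (H : ℝ) (W : ι → E) (x : S) : ℝ :=
  ⨆ a, min (⨆ m, ⟪φ (x, a), W m⟫) H

theorem abs_optimisticValue_sub_le [Finite ι] {φ : S × A → E} (hφ : ∀ p, ‖φ p‖ ≤ 1) (H : ℝ)
    {W₁ W₂ : ι → E} {ε : ℝ} (hε : 0 ≤ ε) (hW : ∀ m, dist (W₁ m) (W₂ m) ≤ ε) (x : S) :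
    |optimisticValue φ H W₁ x - optimisticValue φ H W₂ x| ≤ ε := by
  have hinner (a : A) (m : ι) : |⟪φ (x, a), W₁ m⟫ - ⟪φ (x, a), W₂ m⟫| ≤ ε := by
    rw [← inner_sub_right]
    calc |⟪φ (x, a), W₁ m - W₂ m⟫| ≤ ‖φ (x, a)‖ * ‖W₁ m - W₂ m‖ := abs_real_inner_le_norm _ _
      _ ≤ 1 * ε := mul_le_mul (hφ _) (dist_eq_norm (W₁ m) (W₂ m) ▸ hW m) (norm_nonneg _) zero_le_one
      _ = ε := one_mul ε
  have hbdd (W : ι → E) : BddAbove (range fun a => min (⨆ m, ⟪φ (x, a), W m⟫) H) :=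
    ⟨H, forall_mem_range.2 fun _ => min_le_right _ _⟩
  refine Real.abs_ciSup_sub_ciSup_le (hbdd W₁) (hbdd W₂) hε fun a => ?_
  refine (abs_min_sub_min_le_max _ _ _ _).trans (max_le ?_ (by simpa using hε))
  exact Real.abs_ciSup_sub_ciSup_le (Finite.bddAbove_range _) (Finite.bddAbove_range _) hε
    (hinner a)

end OptimisticValue

theorem multisample_value_class_covering_general
    {S A : Type*} (d M : ℕ) (H B : ℝ)
    (hB : 0 < B)
    (φ : S × A → EuclideanSpace ℝ (Fin d)) (hφ : ∀ p, ‖φ p‖ ≤ 1)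
    (V : (Fin M → EuclideanSpace ℝ (Fin d)) → S → ℝ)
    (hV : ∀ W x, V W x = ⨆ a : A, min (⨆ m : Fin M, ⟪φ (x, a), W m⟫) H)
    (ε : ℝ) (hε : 0 < ε) :
    ∃ 𝒲 : Finset (Fin M → EuclideanSpace ℝ (Fin d)),
      (∀ W ∈ 𝒲, ∀ m, ‖W m‖ ≤ B)
      ∧ (𝒲.card : ℝ) ≤ (1 + 2 * B / ε) ^ (d * M)
      ∧ ∀ W₁ : Fin M → EuclideanSpace ℝ (Fin d), (∀ m, ‖W₁ m‖ ≤ B) →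
          ∃ W₂ ∈ 𝒲, ∀ x : S, |V W₁ x - V W₂ x| ≤ ε := by
  obtain rfl : V = optimisticValue φ H := funext fun W => funext (hV W)
  obtain ⟨s, hs_ball, hs_card, hs_cover⟩ := exists_finset_isCover_closedBall
    (E := EuclideanSpace ℝ (Fin d)) (Real.toNNReal_pos.2 hε) 0 hB.le
  rw [Real.coe_toNNReal _ hε.le, finrank_euclideanSpace_fin] at hs_card
  refine ⟨Fintype.piFinset fun _ => s, fun W hW m => ?_, ?_, fun W₁ hW₁ => ?_⟩
  · simpa using hs_ball (Fintype.mem_piFinset.1 hW m)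
  · rw [Fintype.card_piFinset, Finset.prod_const, Finset.card_univ, Fintype.card_fin,
      Nat.cast_pow, pow_mul]
    gcongr
  · choose W₂ hW₂s hW₂ using fun m => mem_iUnion₂.1 <|
      hs_cover.subset_iUnion_closedBall (mem_closedBall_zero_iff.2 (hW₁ m))
    refine ⟨W₂, Fintype.mem_piFinset.2 hW₂s, abs_optimisticValue_sub_le hφ H hε.le fun m => ?_⟩
    simpa [hε.le] using hW₂ m

/-- Lemma E.11; covering number of the multi-sample
optimistic value-function class used by MS-LMC-LSVI.
With `V_W(x) = sup_a min{ max_m ⟨φ(x,a), w^m⟩, H }` and `‖φ(x,a)‖₂ ≤ 1`, for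
every `ε > 0` there is a set `𝒲` of parameter tuples, each coordinate in the
`B`-ball, with `|𝒲| ≤ (1 + 2B/ε)^{dM}`, inducing an `ε`-cover of
`{V_W : ‖w^m‖₂ ≤ B ∀ m}` in the sup distance; hence
`log N ≤ d M log(1 + 2B/ε)`. -/
theorem multisample_value_class_covering
    {S A : Type*} [Nonempty A] (d M : ℕ) (hM : 1 ≤ M) (H B : ℝ)
    (hH : 0 < H) (hB : 0 < B)
    (φ : S × A → EuclideanSpace ℝ (Fin d)) (hφ : ∀ p, ‖φ p‖ ≤ 1)
    (V : (Fin M → EuclideanSpace ℝ (Fin d)) → S → ℝ)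
    (hV : ∀ W x, V W x = ⨆ a : A, min (⨆ m : Fin M, ⟪φ (x, a), W m⟫) H)
    (ε : ℝ) (hε : 0 < ε) :
    ∃ 𝒲 : Finset (Fin M → EuclideanSpace ℝ (Fin d)),
      (∀ W ∈ 𝒲, ∀ m, ‖W m‖ ≤ B)
      ∧ (𝒲.card : ℝ) ≤ (1 + 2 * B / ε) ^ (d * M)
      ∧ ∀ W₁ : Fin M → EuclideanSpace ℝ (Fin d), (∀ m, ‖W₁ m‖ ≤ B) →
          ∃ W₂ ∈ 𝒲, ∀ x : S, |V W₁ x - V W₂ x| ≤ ε :=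
  multisample_value_class_covering_general d M H B hB φ hφ V hV ε hε
end
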